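/- Fix c > 0 and let B_c(x) = Γ(x)Γ(c-x)/Γ(c) and R_c(x) = -ψ(x) - ψ(c-x) - 2γ for x ∈ (0,c). Then the function q_c(x) = R_c(x)/B_c(x) is strictly decreasing on (0, c/2], and lim_{x→0⁺} q_c(x) = 1. -/

import Mathlib

noncomputable def digamma (x : ℝ) : ℝ := deriv (fun y : ℝ => Real.log (Real.Gamma y)) x

noncomputable def Bc (c x : ℝ) : ℝ := Real.Gamma x * Real.Gamma (c - x) / Real.Gamma c

noncomputable def Rc (c x : ℝ) : ℝ :=
  -digamma x - digamma (c - x) - 2 * Real.eulerMascheroniConstant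

/-!
With `A = ψ + γ` one has `B_c' = (ψ(x) - ψ(c - x)) B_c` and `R_c = -A(x) - A(c - x)`, so
`(R_c / B_c)' = (φ(c - x) - φ(x)) / B_c` with `φ = ψ' - A²`. Since `x < c - x` on `(0, c/2)`, it
suffices that `φ` is decreasing, i.e. that `φ' = -2 (ζ(3, x) + A(x) ζ(2, x)) < 0`, where
`ψ' = ζ(2, ·)` and `ψ'' = -2 ζ(3, ·)` come from the series `A(x) = ∑ (1/(k+1) - 1/(x+k))`. That
series follows from `ψ(x + n) = ψ(x) + ∑_{k<n} 1/(x+k)` and the bounds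
`log (y - 1) ≤ ψ(y) ≤ log y`, which hold by convexity of `log Γ`.

For the limit, `x B_c(x) = Γ(x+1) Γ(c-x) / Γ(c) → 1` and `x R_c(x) = 1 - x (ψ(x+1) + ψ(c-x) + 2γ) → 1`.
-/

open Real Filter Topology Set

local notation "γ" => Real.eulerMascheroniConstant

lemma summable_one_div_add_pow {p : ℕ} (hp : 1 < p) {x : ℝ} (hx : 0 < x) :
    Summable fun k : ℕ => 1 / (x + k) ^ p :=
  ((summable_one_div_nat_add_rpow x p).mpr (by exact_mod_cast hp)).congr fun k => by
    rw [abs_of_pos (by positivity), rpow_natCast, add_comm]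

/-- The Hurwitz zeta function `ζ(p, x)` at an integer argument `p`. -/
noncomputable def hurwitzSum (p : ℕ) (x : ℝ) : ℝ := ∑' k : ℕ, 1 / (x + k) ^ p

lemma hurwitzSum_pos {p : ℕ} (hp : 1 < p) {x : ℝ} (hx : 0 < x) : 0 < hurwitzSum p x :=
  (summable_one_div_add_pow hp hx).tsum_pos (fun k => by positivity) 0 (by positivity)

lemma hurwitzSum_eq_add_one {p : ℕ} (hp : 1 < p) {x : ℝ} (hx : 0 < x) :
    hurwitzSum p x = 1 / x ^ p + hurwitzSum p (x + 1) := by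
  rw [hurwitzSum, (summable_one_div_add_pow hp hx).tsum_eq_zero_add, hurwitzSum]
  congr 1
  · simp
  · exact tsum_congr fun k => by push_cast; ring_nf

lemma hasDerivAt_one_div_add_pow (p : ℕ) {x : ℝ} (k : ℝ) (hx : x + k ≠ 0) :
    HasDerivAt (fun y => 1 / (y + k) ^ p) (-p * (1 / (x + k) ^ (p + 1))) x := by
  have h := (hasDerivAt_zpow (-p : ℤ) (x + k) (Or.inl hx)).comp x ((hasDerivAt_id x).add_const k)
  have hf : (fun y : ℝ => 1 / (y + k) ^ p) = (fun z : ℝ => z ^ (-(p : ℤ))) ∘ fun y => id y + k := by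
    ext y
    simp [zpow_neg]
  rw [hf]
  refine h.congr_deriv ?_
  rw [show (-(p : ℤ) - 1) = -((p + 1 : ℕ) : ℤ) by push_cast; ring, zpow_neg, zpow_natCast]
  push_cast
  ring

lemma hasDerivAt_hurwitzSum {p : ℕ} (hp : 1 < p) {x : ℝ} (hx : 0 < x) :
    HasDerivAt (hurwitzSum p) (-p * hurwitzSum (p + 1) x) x := by
  have hx2 : 0 < x / 2 := by positivity
  have hxt : x ∈ Ioi (x / 2) := by simp [hx]
  have h := hasDerivAt_tsum_of_isPreconnected (g := fun (k : ℕ) (y : ℝ) => 1 / (y + k) ^ p)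
    ((summable_one_div_add_pow (by omega : 1 < p + 1) hx2).mul_left (p : ℝ)) isOpen_Ioi
    isPreconnected_Ioi
    (fun k y hy => hasDerivAt_one_div_add_pow p k (by have : 0 < y := hx2.trans hy; positivity))
    (fun k y (hy : x / 2 < y) => ?_) hxt (summable_one_div_add_pow hp hx) hxt
  · rw [hurwitzSum, ← tsum_mul_left]
    exact h
  · have : 0 < y := hx2.trans hy
    rw [norm_mul, norm_neg, Real.norm_natCast, norm_of_nonneg (by positivity)]
    gcongr

lemma differentiableAt_Gamma_of_pos {x : ℝ} (hx : 0 < x) : DifferentiableAt ℝ Gamma x :=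
  differentiableAt_Gamma fun m => ((neg_nonpos.2 m.cast_nonneg).trans_lt hx).ne'

lemma hasDerivAt_log_Gamma {x : ℝ} (hx : 0 < x) :
    HasDerivAt (fun y => log (Gamma y)) (digamma x) x :=
  ((differentiableAt_Gamma_of_pos hx).log (Gamma_pos_of_pos hx).ne').hasDerivAt

lemma hasDerivAt_Gamma_of_pos {x : ℝ} (hx : 0 < x) :
    HasDerivAt Gamma (digamma x * Gamma x) x := by
  rw [digamma, deriv.log (differentiableAt_Gamma_of_pos hx) (Gamma_pos_of_pos hx).ne',
    div_mul_cancel₀ _ (Gamma_pos_of_pos hx).ne']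
  exact (differentiableAt_Gamma_of_pos hx).hasDerivAt

lemma log_Gamma_add_one {x : ℝ} (hx : 0 < x) : log (Gamma (x + 1)) = log (Gamma x) + log x := by
  rw [Gamma_add_one hx.ne', log_mul hx.ne' (Gamma_pos_of_pos hx).ne', add_comm]

lemma digamma_add_one {x : ℝ} (hx : 0 < x) : digamma (x + 1) = digamma x + 1 / x := by
  have h : HasDerivAt (fun y => log (Gamma (y + 1))) (digamma x + 1 / x) x := by
    rw [one_div]
    refine ((hasDerivAt_log_Gamma hx).add (hasDerivAt_log hx.ne')).congr_of_eventuallyEq ?_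
    filter_upwards [eventually_gt_nhds hx] with y hy using log_Gamma_add_one hy
  exact ((hasDerivAt_log_Gamma (by linarith)).comp_add_const x 1).unique h

lemma digamma_add_nat {x : ℝ} (hx : 0 < x) (n : ℕ) :
    digamma (x + n) = digamma x + ∑ k ∈ Finset.range n, 1 / (x + k) := by
  induction n with
  | zero => simp
  | succ n ih =>
    rw [Nat.cast_succ, ← add_assoc, digamma_add_one (by positivity), ih, Finset.sum_range_succ,
      add_assoc]

lemma digamma_le_log {x : ℝ} (hx : 0 < x) : digamma x ≤ log x := by
  have h := convexOn_log_Gamma.le_slope_of_hasDerivAt (mem_Ioi.2 hx)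
    (mem_Ioi.2 (by linarith : 0 < x + 1)) (lt_add_one x) (hasDerivAt_log_Gamma hx)
  rwa [slope_def_field, add_sub_cancel_left, div_one, Function.comp_apply, Function.comp_apply,
    log_Gamma_add_one hx, add_sub_cancel_left] at h

lemma log_sub_one_le_digamma {x : ℝ} (hx : 1 < x) : log (x - 1) ≤ digamma x := by
  have h := convexOn_log_Gamma.slope_le_of_hasDerivAt (mem_Ioi.2 (by linarith : 0 < x - 1))
    (mem_Ioi.2 (by linarith : 0 < x)) (sub_one_lt x) (hasDerivAt_log_Gamma (by linarith))
  have hrec := log_Gamma_add_one (sub_pos.2 hx)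
  rw [sub_add_cancel] at hrec
  rwa [slope_def_field, sub_sub_cancel, div_one, Function.comp_apply, Function.comp_apply, hrec,
    add_sub_cancel_left] at h

lemma tendsto_digamma_add_nat_sub_log {x : ℝ} (hx : 0 < x) :
    Tendsto (fun n : ℕ => digamma (x + n) - log n) atTop (𝓝 0) := by
  refine tendsto_of_tendsto_of_tendsto_of_le_of_le'
    ((tendsto_log_comp_add_sub_log (x - 1)).comp tendsto_natCast_atTop_atTop)
    ((tendsto_log_comp_add_sub_log x).comp tendsto_natCast_atTop_atTop) ?_ ?_
  · filter_upwards [eventually_ge_atTop 1] with n hn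
    have hn' : (1 : ℝ) ≤ n := by exact_mod_cast hn
    have h := log_sub_one_le_digamma (x := x + n) (by linarith)
    rw [Function.comp_apply, show (n : ℝ) + (x - 1) = x + n - 1 by ring]
    linarith
  · filter_upwards with n
    have h := digamma_le_log (x := x + n) (by positivity)
    rw [Function.comp_apply, add_comm (n : ℝ)]
    linarith

lemma summable_digamma_series {x : ℝ} (hx : 0 < x) :
    Summable fun k : ℕ => 1 / (k + 1 : ℝ) - 1 / (x + k) := by
  set m := min x 1
  have hm : 0 < m := lt_min hx one_pos
  refine Summable.of_norm_bounded ((summable_one_div_add_pow one_lt_two hm).mul_left |x - 1|)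
    fun k => ?_
  have h1 : m + k ≤ k + 1 := by linarith [min_le_right x 1]
  have h2 : m + k ≤ x + k := by linarith [min_le_left x 1]
  have hterm : 1 / (k + 1 : ℝ) - 1 / (x + k) = (x - 1) / ((k + 1) * (x + k)) := by
    field_simp
    ring
  rw [Real.norm_eq_abs, hterm, abs_div, abs_of_pos (by positivity : (0 : ℝ) < (k + 1) * (x + k)),
    mul_one_div, sq]
  gcongr

lemma hasSum_digamma {x : ℝ} (hx : 0 < x) :
    HasSum (fun k : ℕ => 1 / (k + 1 : ℝ) - 1 / (x + k)) (digamma x + γ) := by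
  have hpartial (n : ℕ) : ∑ k ∈ Finset.range n, (1 / (k + 1 : ℝ) - 1 / (x + k)) =
      digamma x + ((harmonic n : ℝ) - log n) - (digamma (x + n) - log n) := by
    rw [Finset.sum_sub_distrib, digamma_add_nat hx, harmonic]
    push_cast
    simp only [one_div]
    ring
  refine (summable_digamma_series hx).hasSum_iff_tendsto_nat.2 ?_
  simp_rw [hpartial]
  simpa using (tendsto_const_nhds.add tendsto_harmonic_sub_log).sub
    (tendsto_digamma_add_nat_sub_log hx)

lemma hasDerivAt_digamma {x : ℝ} (hx : 0 < x) : HasDerivAt digamma (hurwitzSum 2 x) x := by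
  have hx2 : 0 < x / 2 := by positivity
  have hxt : x ∈ Ioi (x / 2) := by simp [hx]
  have h := hasDerivAt_tsum_of_isPreconnected
    (g := fun (k : ℕ) (y : ℝ) => 1 / (k + 1 : ℝ) - 1 / (y + k))
    (g' := fun k y => 1 / (y + k) ^ 2)
    (summable_one_div_add_pow one_lt_two hx2) isOpen_Ioi isPreconnected_Ioi
    (fun k y (hy : x / 2 < y) => ?_) (fun k y (hy : x / 2 < y) => ?_) hxt
    (summable_digamma_series hx) hxt
  · refine (h.const_add (-γ)).congr_of_eventuallyEq ?_
    filter_upwards [lt_mem_nhds hx] with y hy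
    rw [(hasSum_digamma hy).tsum_eq]
    ring
  · have hy0 : y + k ≠ 0 := by have : 0 < y := hx2.trans hy; positivity
    have h := (((hasDerivAt_id y).add_const (k : ℝ)).inv hy0).const_sub (1 / (k + 1 : ℝ))
    simp only [id, one_div] at h ⊢
    exact h.congr_deriv (by ring)
  · have : 0 < y := hx2.trans hy
    rw [norm_of_nonneg (by positivity)]
    gcongr

lemma mul_hurwitzSum_two_lt_digamma_add_one {x : ℝ} (hx : 0 < x) :
    x * hurwitzSum 2 (x + 1) < digamma (x + 1) + γ := by
  have hx1 : 0 < x + 1 := by linarith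
  have h := (hasSum_digamma hx1).sub ((summable_one_div_add_pow one_lt_two hx1).hasSum.mul_left x)
  have hterm (k : ℕ) : 1 / (k + 1 : ℝ) - 1 / (x + 1 + k) - x * (1 / (x + 1 + k) ^ 2) =
      x ^ 2 / ((k + 1) * (x + 1 + k) ^ 2) := by
    field_simp
    ring
  simp only [hterm] at h
  rw [← sub_pos, hurwitzSum, ← h.tsum_eq]
  exact h.summable.tsum_pos (fun k => by positivity) 0 (by positivity)

/-- The recurrences reduce this to `x + 1`, where `ψ + γ ≥ 0` and `x ψ'(x + 1) < ψ(x + 1) + γ`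
make every term positive. -/
lemma hurwitzSum_three_add_digamma_mul_hurwitzSum_two_pos {x : ℝ} (hx : 0 < x) :
    0 < hurwitzSum 3 x + (digamma x + γ) * hurwitzSum 2 x := by
  have hx1 : 0 < x + 1 := by linarith
  have hlt := mul_hurwitzSum_two_lt_digamma_add_one hx
  have hT := hurwitzSum_pos one_lt_two hx1
  have hA : 0 ≤ digamma (x + 1) + γ := (mul_pos hx hT).le.trans hlt.le
  have hdecomp : hurwitzSum 3 x + (digamma x + γ) * hurwitzSum 2 x =
      hurwitzSum 3 (x + 1) + (digamma (x + 1) + γ) * hurwitzSum 2 (x + 1) +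
        (digamma (x + 1) + γ - x * hurwitzSum 2 (x + 1)) / x ^ 2 := by
    rw [hurwitzSum_eq_add_one (by norm_num) hx, hurwitzSum_eq_add_one one_lt_two hx,
      digamma_add_one hx]
    field_simp
    ring
  rw [hdecomp]
  have := hurwitzSum_pos (by norm_num : 1 < 3) hx1
  have := mul_nonneg hA hT.le
  have : 0 < (digamma (x + 1) + γ - x * hurwitzSum 2 (x + 1)) / x ^ 2 :=
    div_pos (sub_pos.2 hlt) (by positivity)
  linarith

noncomputable def trigammaSubSq (x : ℝ) : ℝ := hurwitzSum 2 x - (digamma x + γ) ^ 2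

lemma hasDerivAt_trigammaSubSq {x : ℝ} (hx : 0 < x) :
    HasDerivAt trigammaSubSq
      (-2 * (hurwitzSum 3 x + (digamma x + γ) * hurwitzSum 2 x)) x := by
  have h := (hasDerivAt_hurwitzSum one_lt_two hx).sub
    (((hasDerivAt_digamma hx).add_const γ).pow 2)
  refine h.congr_deriv ?_
  push_cast
  ring

lemma strictAntiOn_trigammaSubSq : StrictAntiOn trigammaSubSq (Ioi 0) :=
  strictAntiOn_of_hasDerivWithinAt_neg (convex_Ioi 0)
    (fun _ hx => (hasDerivAt_trigammaSubSq hx).continuousAt.continuousWithinAt)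
    (fun x hx => (hasDerivAt_trigammaSubSq (interior_subset hx)).hasDerivWithinAt)
    fun x hx => by
      have := hurwitzSum_three_add_digamma_mul_hurwitzSum_two_pos (interior_subset hx : 0 < x)
      linarith

lemma Bc_pos {c x : ℝ} (hx : 0 < x) (hxc : x < c) : 0 < Bc c x :=
  div_pos (mul_pos (Gamma_pos_of_pos hx) (Gamma_pos_of_pos (sub_pos.2 hxc)))
    (Gamma_pos_of_pos (hx.trans hxc))

lemma hasDerivAt_Bc {c x : ℝ} (hx : 0 < x) (hxc : x < c) :
    HasDerivAt (Bc c) ((digamma x - digamma (c - x)) * Bc c x) x := by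
  have hreflect := (hasDerivAt_Gamma_of_pos (sub_pos.2 hxc)).comp_const_sub c x
  refine (((hasDerivAt_Gamma_of_pos hx).mul hreflect).div_const (Gamma c)).congr_deriv ?_
  rw [Bc]
  ring

lemma hasDerivAt_Rc {c x : ℝ} (hx : 0 < x) (hxc : x < c) :
    HasDerivAt (Rc c) (hurwitzSum 2 (c - x) - hurwitzSum 2 x) x := by
  have hreflect := (hasDerivAt_digamma (sub_pos.2 hxc)).comp_const_sub c x
  refine (((hasDerivAt_digamma hx).neg.sub hreflect).sub_const _).congr_deriv ?_
  ring

/-- Since `R_c = -(ψ(x) + γ) - (ψ(c - x) + γ)` and `B_c' = (ψ(x) - ψ(c - x)) B_c`, the numerator of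
the quotient rule is a difference of squares. -/
lemma hasDerivAt_Rc_div_Bc {c x : ℝ} (hx : 0 < x) (hxc : x < c) :
    HasDerivAt (fun y => Rc c y / Bc c y)
      ((trigammaSubSq (c - x) - trigammaSubSq x) / Bc c x) x := by
  have hB := Bc_pos hx hxc
  refine ((hasDerivAt_Rc hx hxc).div (hasDerivAt_Bc hx hxc) hB.ne').congr_deriv ?_
  rw [Rc, trigammaSubSq, trigammaSubSq]
  field_simp
  ring

lemma tendsto_mul_Bc {c : ℝ} (hc : 0 < c) : Tendsto (fun x => x * Bc c x) (𝓝[>] 0) (𝓝 1) := by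
  have hcont : ContinuousAt (fun x => Gamma (x + 1) * Gamma (c - x) / Gamma c) 0 := by
    have h1 := (differentiableAt_Gamma_of_pos (zero_lt_one' ℝ)).continuousAt
    have h2 := (differentiableAt_Gamma_of_pos hc).continuousAt
    exact ((h1.comp_of_eq (f := (· + 1)) (by fun_prop) (zero_add 1)).mul
      (h2.comp_of_eq (f := (c - ·)) (by fun_prop) (sub_zero c))).div_const _
  have hlim := (hcont.continuousWithinAt (s := Ioi 0)).tendsto
  rw [zero_add, sub_zero, Gamma_one, one_mul, div_self (Gamma_pos_of_pos hc).ne'] at hlim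
  refine hlim.congr' ?_
  filter_upwards [self_mem_nhdsWithin] with x (hx : 0 < x)
  rw [Bc, Gamma_add_one hx.ne']
  ring

lemma tendsto_mul_Rc {c : ℝ} (hc : 0 < c) : Tendsto (fun x => x * Rc c x) (𝓝[>] 0) (𝓝 1) := by
  have hcont : ContinuousAt
      (fun x => 1 - x * (digamma (x + 1) + digamma (c - x) + 2 * γ)) 0 := by
    have h1 := (hasDerivAt_digamma (zero_lt_one' ℝ)).continuousAt
    have h2 := (hasDerivAt_digamma hc).continuousAt
    exact continuousAt_const.sub (continuousAt_id.mul
      (((h1.comp_of_eq (f := (· + 1)) (by fun_prop) (zero_add 1)).add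
        (h2.comp_of_eq (f := (c - ·)) (by fun_prop) (sub_zero c))).add_const _))
  have hlim := (hcont.continuousWithinAt (s := Ioi 0)).tendsto
  rw [zero_mul, sub_zero] at hlim
  refine hlim.congr' ?_
  filter_upwards [Ioo_mem_nhdsGT hc] with x hx
  have hx0 : x ≠ 0 := hx.1.ne'
  rw [Rc, digamma_add_one hx.1]
  field_simp
  ring

theorem stmt_8 (c : ℝ) (hc : 0 < c) :
    StrictAntiOn (fun x => Rc c x / Bc c x) (Set.Ioc 0 (c / 2)) ∧
      Filter.Tendsto (fun x => Rc c x / Bc c x) (nhdsWithin 0 (Set.Ioi 0)) (nhds 1) := by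
  have hderiv (x : ℝ) (hx : x ∈ Ioc 0 (c / 2)) := hasDerivAt_Rc_div_Bc hx.1 (by linarith [hx.2])
  constructor
  · refine strictAntiOn_of_hasDerivWithinAt_neg (convex_Ioc 0 (c / 2))
      (fun x hx => (hderiv x hx).continuousAt.continuousWithinAt)
      (fun x hx => (hderiv x (interior_subset hx)).hasDerivWithinAt) fun x hx => ?_
    rw [interior_Ioc] at hx
    have hxc : x < c - x := by linarith [hx.2]
    exact div_neg_of_neg_of_pos
      (sub_neg.2 (strictAntiOn_trigammaSubSq hx.1 (hx.1.trans hxc) hxc))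
      (Bc_pos hx.1 (by linarith))
  · have hlim := (tendsto_mul_Rc hc).div (tendsto_mul_Bc hc) one_ne_zero
    rw [div_one] at hlim
    refine hlim.congr' ?_
    filter_upwards [self_mem_nhdsWithin] with x (hx : 0 < x)
    exact mul_div_mul_left _ _ hx.ne'
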